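/- arXiv:0910.2825 — 2 statements merged into one kernel-verified Lean document; each statement's English description precedes it below -/
import Mathlib

section
/- Let ⟨·|·⟩ be a compatibility support mapping for S and D(X,A) = ⟨X|{1}⟩ ⊖ ⟨X|A∖X⟩. Then for every finite A ⊆ S, the family (D(X,A))_{X⊆A} is a decomposition of unit: the sum ⊕_{X⊆A} D(X,A) is defined and equals 1. -/
universe u

/-- An effect algebra: a partial commutative, associative operation `add`
(modelled as an `Option`-valued total operation), with constants `zero`, `one`,
unique orthosupplements, and `a ⊕ 1` defined only for `a = 0`. -/
structure EffectAlgebra (α : Type u) where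
  add : α → α → Option α
  zero : α
  one : α
  add_comm : ∀ a b : α, add a b = add b a
  add_assoc : ∀ a b c ab abc : α, add a b = some ab → add ab c = some abc →
    ∃ bc : α, add b c = some bc ∧ add a bc = some abc
  orthosupp : ∀ a : α, ∃! a' : α, add a a' = some one
  add_one : ∀ a b : α, add a one = some b → a = zero

namespace EffectAlgebra

variable {α : Type u}

/-- The induced order: `a ≤ b` iff `∃ c, a ⊕ c = b`. -/
def le (E : EffectAlgebra α) (a b : α) : Prop := ∃ c, E.add a c = some b

/-- The orthosupplement `a'`. -/
noncomputable def compl (E : EffectAlgebra α) (a : α) : α :=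
  (E.orthosupp a).exists.choose

open Classical in
/-- The partial difference `b ⊖ a` (junk value `0` when `a ≤ b` fails). -/
noncomputable def sub (E : EffectAlgebra α) (b a : α) : α :=
  if h : ∃ c, E.add a c = some b then h.choose else E.zero

/-- Iterated partial sum of a list of elements. -/
noncomputable def osum (E : EffectAlgebra α) : List α → Option α
  | [] => some E.zero
  | a :: l => (E.osum l).bind fun s => E.add a s

end EffectAlgebra

namespace EffectAlgebra

variable {α : Type u}

/-- `f` is a compatibility support mapping for `S` (with `1 ∈ S`). -/
def IsCSM [DecidableEq α] (E : EffectAlgebra α) (S : Set α) (f : Finset α → Finset α → α) : Prop :=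
  E.one ∈ S ∧
  (∀ U V₁ V₂ : Finset α, ↑U ⊆ S → ↑V₁ ⊆ S → ↑V₂ ⊆ S → V₁ ⊆ V₂ →
    E.le (f U V₁) (f U V₂)) ∧
  (∀ U V : Finset α, ↑U ⊆ S → ↑V ⊆ S → E.le (f U V) (f U {E.one})) ∧
  (∀ U : Finset α, ↑U ⊆ S → f U ∅ = E.zero) ∧
  (∀ c ∈ S, f ∅ {c} = c) ∧
  (∀ (U V : Finset α) (c : α), ↑U ⊆ S → ↑V ⊆ S → c ∈ S → c ∉ U → c ∉ V →
    E.sub (f (insert c U) {E.one}) (f (insert c U) V) =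
      E.sub (f U (insert c V)) (f U V))

/-- `f` is a strong compatibility support mapping for `S`:
condition (e*) holds with no restriction on `c`. -/
def IsStrongCSM [DecidableEq α] (E : EffectAlgebra α) (S : Set α) (f : Finset α → Finset α → α) : Prop :=
  E.one ∈ S ∧
  (∀ U V₁ V₂ : Finset α, ↑U ⊆ S → ↑V₁ ⊆ S → ↑V₂ ⊆ S → V₁ ⊆ V₂ →
    E.le (f U V₁) (f U V₂)) ∧
  (∀ U V : Finset α, ↑U ⊆ S → ↑V ⊆ S → E.le (f U V) (f U {E.one})) ∧
  (∀ U : Finset α, ↑U ⊆ S → f U ∅ = E.zero) ∧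
  (∀ c ∈ S, f ∅ {c} = c) ∧
  (∀ (U V : Finset α) (c : α), ↑U ⊆ S → ↑V ⊆ S → c ∈ S →
    E.sub (f (insert c U) {E.one}) (f (insert c U) V) =
      E.sub (f U (insert c V)) (f U V))

/-- `D(X,A) = ⟨X|{1}⟩ ⊖ ⟨X|A∖X⟩`. -/
noncomputable def Dmap [DecidableEq α] (E : EffectAlgebra α)
    (f : Finset α → Finset α → α) (X A : Finset α) : α :=
  E.sub (f X {E.one}) (f X (A \ X))

end EffectAlgebra

/-!
Induction on `A`. For `c ∉ A`, split the subsets of `insert c A` into pairs `X`, `insert c X`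
with `X ⊆ A`. Axiom (e) rewrites `D(insert c X, insert c A)` as
`⟨X|insert c (A∖X)⟩ ⊖ ⟨X|A∖X⟩`, and `D(X, insert c A) = ⟨X|{1}⟩ ⊖ ⟨X|insert c (A∖X)⟩`, so the
pair telescopes to `D(X, A)`. Hence the sum for `insert c A` equals the sum for `A`, and for
`A = ∅` it is `⟨∅|{1}⟩ ⊖ ⟨∅|∅⟩ = 1 ⊖ 0 = 1`.
-/

namespace EffectAlgebra

variable {α : Type u} (E : EffectAlgebra α)

theorem add_left_cancel {a x y b : α} (hx : E.add a x = some b) (hy : E.add a y = some b) :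
    x = y := by
  obtain ⟨b', hb'⟩ := (E.orthosupp b).exists
  obtain ⟨w, hxw, haw⟩ := E.add_assoc a x b' b E.one hx hb'
  obtain ⟨w', hyw', haw'⟩ := E.add_assoc a y b' b E.one hy hb'
  obtain rfl : w = w' := (E.orthosupp a).unique haw haw'
  have hwa : E.add w a = some E.one := E.add_comm w a ▸ haw
  obtain ⟨v, hb'a, hxv⟩ := E.add_assoc x b' a w E.one hxw hwa
  obtain ⟨v', hb'a', hyv'⟩ := E.add_assoc y b' a w E.one hyw' hwa
  obtain rfl : v = v' := Option.some.inj (hb'a.symm.trans hb'a')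
  -- `x` and `y` are both the orthosupplement of `b' ⊕ a`
  exact (E.orthosupp v).unique (E.add_comm v x ▸ hxv) (E.add_comm v y ▸ hyv')

theorem add_zero (a : α) : E.add a E.zero = some a := by
  obtain ⟨z, hz⟩ := (E.orthosupp E.one).exists
  obtain rfl : z = E.zero := E.add_one z E.one (E.add_comm z E.one ▸ hz)
  obtain ⟨a', ha'⟩ := (E.orthosupp a).exists
  have ha'a : E.add a' a = some E.one := E.add_comm a a' ▸ ha'
  obtain ⟨w, haw, ha'w⟩ := E.add_assoc a' a E.zero E.one E.one ha'a hz
  exact E.add_left_cancel ha'a ha'w ▸ haw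

theorem sub_eq_of_add_eq {a c b : α} (h : E.add a c = some b) : E.sub b a = c := by
  have hex : ∃ c, E.add a c = some b := ⟨c, h⟩
  rw [sub, dif_pos hex]
  exact E.add_left_cancel hex.choose_spec h

theorem sub_add_sub {a b t : α} (hab : E.le a b) (hbt : E.le b t) :
    E.add (E.sub t b) (E.sub b a) = some (E.sub t a) := by
  obtain ⟨u, hu⟩ := hab
  obtain ⟨v, hv⟩ := hbt
  obtain ⟨w, huv, haw⟩ := E.add_assoc a u v b t hu hv
  rw [E.sub_eq_of_add_eq hu, E.sub_eq_of_add_eq hv, E.sub_eq_of_add_eq haw, E.add_comm]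
  exact huv

theorem add_assoc_symm {a b c bc abc : α} (hbc : E.add b c = some bc)
    (habc : E.add a bc = some abc) : ∃ ab, E.add a b = some ab ∧ E.add ab c = some abc := by
  obtain ⟨ba, hba, hcba⟩ :=
    E.add_assoc c b a bc abc (E.add_comm b c ▸ hbc) (E.add_comm a bc ▸ habc)
  exact ⟨ba, E.add_comm b a ▸ hba, E.add_comm ba c ▸ hcba⟩

theorem bind_add_left_comm (a b : α) (x : Option α) :
    (x.bind (E.add b)).bind (E.add a) = (x.bind (E.add a)).bind (E.add b) := by
  have key : ∀ a b r : α, (x.bind (E.add b)).bind (E.add a) = some r →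
      (x.bind (E.add a)).bind (E.add b) = some r := by
    simp only [Option.bind_eq_some_iff]
    rintro a b r ⟨bs, ⟨s, rfl, hbs⟩, habs⟩
    obtain ⟨sb, hsb, hsba⟩ := E.add_assoc s b a bs r (E.add_comm b s ▸ hbs) (E.add_comm a bs ▸ habs)
    obtain ⟨as, has, hbas⟩ := E.add_assoc b a s sb r (E.add_comm b a ▸ hsb) (E.add_comm sb s ▸ hsba)
    exact ⟨as, ⟨s, rfl, has⟩, hbas⟩
  exact Option.ext fun r => ⟨key a b r, key b a r⟩

theorem osum_perm {l l' : List α} (h : l.Perm l') : E.osum l = E.osum l' := by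
  induction h with
  | nil => rfl
  | cons a _ ih => simp only [osum, ih]
  | swap a b l => exact E.bind_add_left_comm b a (E.osum l)
  | trans _ _ ih ih' => exact ih.trans ih'

theorem osum_cons_cons_of_add_eq {a b s : α} (hs : E.add a b = some s) (l : List α) :
    E.osum (a :: b :: l) = E.osum (s :: l) := by
  refine Option.ext fun r => ?_
  simp only [osum, Option.bind_eq_some_iff]
  constructor
  · rintro ⟨bt, ⟨t, hl, hbt⟩, habt⟩
    obtain ⟨ab, hab, habt'⟩ := E.add_assoc_symm hbt habt
    exact ⟨t, hl, Option.some.inj (hab.symm.trans hs) ▸ habt'⟩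
  · rintro ⟨t, hl, hst⟩
    obtain ⟨bt, hbt, habt⟩ := E.add_assoc a b t s r hs hst
    exact ⟨bt, ⟨t, hl, hbt⟩, habt⟩

theorem osum_map_append_map {β : Type*} {g h k : β → α} {l : List β}
    (hghk : ∀ x ∈ l, E.add (g x) (h x) = some (k x)) :
    E.osum (l.map g ++ l.map h) = E.osum (l.map k) := by
  induction l with
  | nil => rfl
  | cons x l ih =>
    have hperm : ((x :: l).map g ++ (x :: l).map h).Perm (g x :: h x :: (l.map g ++ l.map h)) :=
      List.perm_middle.cons (g x)
    rw [E.osum_perm hperm, E.osum_cons_cons_of_add_eq (hghk x List.mem_cons_self)]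
    simp only [osum, List.map_cons]
    rw [ih fun y hy => hghk y (List.mem_cons_of_mem x hy)]

end EffectAlgebra

theorem Finset.perm_map_toList_powerset_insert {α β : Type*} [DecidableEq α] {c : α}
    {A : Finset α} (hc : c ∉ A) (F : Finset α → β) :
    ((insert c A).powerset.toList.map F).Perm
      (A.powerset.toList.map F ++ A.powerset.toList.map (fun X => F (insert c X))) := by
  have hdisj : Disjoint A.powerset (A.powerset.image (insert c)) := by
    refine Finset.disjoint_left.mpr fun X hX hX' => ?_
    obtain ⟨Y, -, rfl⟩ := Finset.mem_image.mp hX'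
    exact hc (Finset.mem_powerset.mp hX (Finset.mem_insert_self c Y))
  have hinj : Set.InjOn (insert c) (A.powerset : Set (Finset α)) := by
    intro X hX Y hY hXY
    have hcX : c ∉ X := fun h => hc (Finset.mem_powerset.mp hX h)
    have hcY : c ∉ Y := fun h => hc (Finset.mem_powerset.mp hY h)
    rw [← Finset.erase_insert hcX, ← Finset.erase_insert hcY, hXY]
  have hval : (insert c A).powerset.val = A.powerset.val + A.powerset.val.map (insert c) := by
    rw [Finset.powerset_insert, ← Finset.disjUnion_eq_union _ _ hdisj, Finset.disjUnion_val,
      Finset.image_val_of_injOn hinj]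
  rw [← Multiset.coe_eq_coe]
  simp only [← Multiset.map_coe, ← Multiset.coe_add, Finset.coe_toList, hval, Multiset.map_add,
    Multiset.map_map, Function.comp_def]

namespace EffectAlgebra

variable {α : Type u} [DecidableEq α] {E : EffectAlgebra α} {S : Set α}
  {f : Finset α → Finset α → α}

theorem IsCSM.Dmap_add_Dmap_insert (hf : E.IsCSM S f) {A X : Finset α} {c : α}
    (hA : ↑A ⊆ S) (hcS : c ∈ S) (hcA : c ∉ A) (hXA : X ⊆ A) :
    E.add (E.Dmap f X (insert c A)) (E.Dmap f (insert c X) (insert c A)) =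
      some (E.Dmap f X A) := by
  obtain ⟨-, hmono, hle_one, -, -, hshift⟩ := hf
  have hcX : c ∉ X := fun h => hcA (hXA h)
  have hcAX : c ∉ A \ X := fun h => hcA (Finset.mem_sdiff.mp h).1
  have hXS : ↑X ⊆ S := (Finset.coe_subset.mpr hXA).trans hA
  have hAXS : ↑(A \ X) ⊆ S := (Finset.coe_subset.mpr Finset.sdiff_subset).trans hA
  have hcAXS : ↑(insert c (A \ X)) ⊆ S := by
    rw [Finset.coe_insert]
    exact Set.insert_subset hcS hAXS
  have hdiff : insert c A \ X = insert c (A \ X) := Finset.insert_sdiff_of_notMem A hcX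
  have hdiff' : insert c A \ insert c X = A \ X := by
    rw [Finset.insert_sdiff_insert, Finset.sdiff_insert_of_notMem hcA]
  rw [Dmap, Dmap, Dmap, hdiff, hdiff', hshift X (A \ X) c hXS hAXS hcS hcX hcAX]
  exact E.sub_add_sub (hmono X _ _ hXS hAXS hcAXS (Finset.subset_insert c _))
    (hle_one X _ hXS hcAXS)

theorem IsCSM.Dmap_empty_empty (hf : E.IsCSM S f) : E.Dmap f ∅ ∅ = E.one := by
  obtain ⟨h1S, -, -, hzero, hsingleton, -⟩ := hf
  rw [Dmap, Finset.empty_sdiff, hsingleton E.one h1S, hzero ∅ (by simp)]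
  exact E.sub_eq_of_add_eq (E.add_comm E.zero E.one ▸ E.add_zero E.one)

end EffectAlgebra

/-- For every finite `A ⊆ S`, the family `(D(X,A))_{X⊆A}` is a decomposition
of unit. -/
theorem csm_D_decomposition_of_unit {α : Type u} [DecidableEq α] (E : EffectAlgebra α)
    (S : Set α) (f : Finset α → Finset α → α) (hf : E.IsCSM S f)
    (A : Finset α) (hA : ↑A ⊆ S) :
    E.osum (A.powerset.toList.map (fun X => E.Dmap f X A)) = some E.one := by
  induction A using Finset.induction_on with
  | empty =>
    simp only [Finset.powerset_empty, Finset.toList_singleton, List.map_cons, List.map_nil,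
      hf.Dmap_empty_empty, EffectAlgebra.osum, Option.bind_some]
    exact E.add_zero E.one
  | @insert c A hcA ih =>
    rw [Finset.coe_insert, Set.insert_subset_iff] at hA
    rw [E.osum_perm (Finset.perm_map_toList_powerset_insert hcA _),
      E.osum_map_append_map fun X hX =>
        hf.Dmap_add_Dmap_insert hA.2 hA.1 hcA (Finset.mem_powerset.mp (Finset.mem_toList.mp hX))]
    exact ih hA.2
end

section
/- Let E be an effect algebra and S a coexistent subset of E (i.e., S is contained in the range of some observable α : B → E from a Boolean algebra B). Then S ∪ {1} admits a strong compatibility support mapping. -/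
universe u

namespace EffectAlgebra

/-- An observable: a map from a Boolean algebra to an effect algebra preserving
`0`, `1` and sending disjoint joins to orthogonal sums. -/
def IsObservable {α : Type u} (E : EffectAlgebra α) {B : Type u}
    [BooleanAlgebra B] (g : B → α) : Prop :=
  g ⊥ = E.zero ∧ g ⊤ = E.one ∧
    ∀ x y : B, x ⊓ y = ⊥ → E.add (g x) (g y) = some (g (x ⊔ y))

end EffectAlgebra


namespace EffectAlgebra

variable {α : Type u}

theorem cancel (E : EffectAlgebra α) {a b c d : α}
    (h1 : E.add a b = some d) (h2 : E.add a c = some d) : b = c := by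
  obtain ⟨w, hw, -⟩ := E.orthosupp d
  obtain ⟨x, hbw, hax⟩ := E.add_assoc a b w d E.one h1 hw
  obtain ⟨y, hcw, hay⟩ := E.add_assoc a c w d E.one h2 hw
  have hxy : x = y := (E.orthosupp a).unique hax hay
  subst hxy
  obtain ⟨z, hwa, hbz⟩ := E.add_assoc b w a x E.one hbw (by rw [E.add_comm]; exact hax)
  obtain ⟨z', hwa', hcz⟩ := E.add_assoc c w a x E.one hcw (by rw [E.add_comm]; exact hax)
  have hz : z = z' := by rw [hwa] at hwa'; exact Option.some.inj hwa'
  subst hz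
  exact (E.orthosupp z).unique (by rw [E.add_comm]; exact hbz) (by rw [E.add_comm]; exact hcz)

theorem sub_eq' (E : EffectAlgebra α) {a c b : α} (h : E.add a c = some b) :
    E.sub b a = c := by
  have hex : ∃ c, E.add a c = some b := ⟨c, h⟩
  rw [sub, dif_pos hex]
  exact E.cancel hex.choose_spec h

end EffectAlgebra

/-- Every coexistent subset `S` of an effect algebra admits a strong
compatibility support mapping for `S ∪ {1}`. -/
theorem strongCSM_of_coexistent {α : Type u} [DecidableEq α] (E : EffectAlgebra α)
    (S : Set α) (B : Type u) [BooleanAlgebra B] (g : B → α)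
    (hg : E.IsObservable g) (hS : S ⊆ Set.range g) :
    ∃ f : Finset α → Finset α → α, E.IsStrongCSM (S ∪ {E.one}) f := by
  classical
  obtain ⟨hg0, hg1, hgadd⟩ := hg
  set b : α → B := fun x => if x = E.one then ⊤ else if h : x ∈ S then (hS h).choose else ⊥
    with hbdef
  have hgb : ∀ x ∈ S ∪ {E.one}, g (b x) = x := by
    intro x hx
    rcases eq_or_ne x E.one with h1 | h1
    · simp [hbdef, h1, hg1]
    · rcases hx with hxS | hx1
      · simp [hbdef, h1, hxS, (hS hxS).choose_spec]
      · exact absurd hx1 h1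
  have hb1 : b E.one = ⊤ := by simp [hbdef]
  have hadd : ∀ x y : B, x ≤ y → E.add (g x) (g (y \ x)) = some (g y) := by
    intro x y hxy
    have h := hgadd x (y \ x) (by simp)
    rwa [sup_sdiff_cancel_right hxy] at h
  have hle : ∀ x y : B, x ≤ y → E.le (g x) (g y) := fun x y hxy => ⟨_, hadd x y hxy⟩
  have hsub : ∀ x y : B, y ≤ x → E.sub (g x) (g y) = g (x \ y) :=
    fun x y hyx => E.sub_eq' (hadd y x hyx)
  refine ⟨fun U V => g (U.inf b ⊓ V.sup b), Or.inr rfl, ?_, ?_, ?_, ?_, ?_⟩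
  · intro U V₁ V₂ _ _ _ h12
    exact hle _ _ (inf_le_inf_left _ (Finset.sup_mono h12))
  · intro U V _ _
    simp only [Finset.sup_singleton, hb1]
    exact hle _ _ (le_inf inf_le_left (inf_le_of_left_le le_top))
  · intro U _
    simp [hg0]
  · intro c hc
    simpa [Finset.inf_empty, Finset.sup_singleton] using hgb c hc
  · intro U V c _ _ _
    simp only [Finset.inf_insert, Finset.sup_insert, Finset.sup_singleton, hb1, inf_top_eq]
    rw [hsub _ _ inf_le_left, hsub _ _ (inf_le_inf_left _ le_sup_right)]
    congr 1
    rw [sdiff_inf_self_left, inf_sup_left, sup_sdiff_right_self, sdiff_eq, sdiff_eq, compl_inf,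
      inf_sup_left, inf_right_comm (U.inf b) (b c) (U.inf b)ᶜ, inf_compl_self, bot_inf_eq,
      bot_sup_eq, inf_comm (b c) (U.inf b)]
end
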